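/- With notation as in the Kumar criterion computation for ramified SU₃ (Case A): setting A_l := ∑_{i=0}^{2l-1} s_{1,i}(α₀)⁻¹ · s_{1,i}(α₁)⁻¹ in the fraction field Q of the symmetric algebra on the affine root lattice, one has A_l = 4l · α₀⁻¹ · s_{1,2l-1}(α₀)⁻¹ for every l ≥ 1. -/

import Mathlib

/-! Kumar-criterion computation for the ramified `SU₃`, Case A (absolutely special vertex):
`A_l = ∑_{i=0}^{2l-1} s_{1,i}(α₀)⁻¹ s_{1,i}(α₁)⁻¹ = 4l · α₀⁻¹ · s_{1,2l-1}(α₀)⁻¹`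
in the fraction field of the symmetric algebra of the affine root lattice `ℤα₀ ⊕ ℤα₁`.

We represent an element `a·α₀ + b·α₁` of the root lattice by `(a, b) : ℤ × ℤ`, acted on by
the reflections `s₀, s₁` via `s₁(α₁) = -α₁`, `s₀(α₀) = -α₀`, `s₀(α₁) = α₁+α₀`,
`s₁(α₀) = α₀+4α₁`, and evaluate in the fraction field of `ℚ[α₀, α₁]` (two independent
transcendental generators). -/

noncomputable section

/-- `s₀` on the affine root lattice in the basis `(α₀, α₁)`. -/
def s0 : ℤ × ℤ → ℤ × ℤ := fun p => (-p.1 + p.2, p.2)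

/-- `s₁` on the affine root lattice in the basis `(α₀, α₁)`. -/
def s1 : ℤ × ℤ → ℤ × ℤ := fun p => (p.1, 4 * p.1 - p.2)

/-- `s_m`: `s₀` for even `m`, `s₁` for odd `m`. -/
def sref (m : ℕ) : ℤ × ℤ → ℤ × ℤ := if Even m then s0 else s1

/-- `sseq start len = s_{start} ⋯ s_{start+len-1}` (so `s_{i,j} = sseq i (j+1-i)`). -/
def sseq (start len : ℕ) : ℤ × ℤ → ℤ × ℤ :=
  fun v => (List.range' start len).foldr (fun m w => sref m w) v

/-- the fraction field `Q` of the symmetric algebra `ℚ[α₀, α₁]`. -/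
abbrev Qfield : Type := FractionRing (MvPolynomial (Fin 2) ℚ)

/-- `α₀` as an element of `Q`. -/
def A0 : Qfield := algebraMap (MvPolynomial (Fin 2) ℚ) Qfield (MvPolynomial.X 0)

/-- `α₁` as an element of `Q`. -/
def A1 : Qfield := algebraMap (MvPolynomial (Fin 2) ℚ) Qfield (MvPolynomial.X 1)

/-- evaluation of a root-lattice element `a·α₀ + b·α₁` in `Q`. -/
def ev (p : ℤ × ℤ) : Qfield := p.1 • A0 + p.2 • A1

/-! `s_{1,2k} = (s₁s₀)ᵏ` and `s₁s₀ = 1 + N` with `N² = 0`, so every `s_{1,i}(αⱼ)` is a linear form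
whose coefficients are affine in `⌊i/2⌋`: with `P_k = (2k+1)α₀ + (4k+4)α₁` and `R_k = kα₀ + (2k+1)α₁`
(`rootP`, `rootR`) one gets `s_{1,2k}(α₀) = -P_{k-1}`, `s_{1,2k}(α₁) = R_k`, `s_{1,2k+1}(α₀) = P_k`,
`s_{1,2k+1}(α₁) = -R_k`. Since `(k+1)P_{k-1} - kP_k = -α₀` and `P_{k-1} + P_k = 4R_k`, adding the
terms `i = 2k, 2k+1` turns `4k/(α₀P_{k-1})` into `4(k+1)/(α₀P_k)`; as `P_{-1} = -α₀`, the
induction starts at `l = 0`. -/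

lemma telescope_step {F : Type*} [Field F] {x p q r m : F} (hx : x ≠ 0) (hp : p ≠ 0)
    (hq : q ≠ 0) (hr : r ≠ 0) (h₁ : (m + 1) * p - m * q = -x) (h₂ : p + q = 4 * r) :
    4 * m * (x⁻¹ * p⁻¹) + (-p)⁻¹ * r⁻¹ + q⁻¹ * (-r)⁻¹ = 4 * (m + 1) * (x⁻¹ * q⁻¹) := by
  field_simp
  linear_combination (-4 * r) * h₁ - x * h₂

lemma sseq_succ (start n : ℕ) (p : ℤ × ℤ) :
    sseq start (n + 1) p = sseq start n (sref (start + n) p) := by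
  simp [sseq, List.range'_concat, List.foldr_append]

lemma sref_of_even {m : ℕ} (hm : Even m) : sref m = s0 := if_pos hm

lemma sref_of_odd {m : ℕ} (hm : Odd m) : sref m = s1 := if_neg (Nat.not_even_iff_odd.2 hm)

lemma sseq_one_two_mul_add_one (k : ℕ) (p : ℤ × ℤ) :
    sseq 1 (2 * k + 1) p = sseq 1 (2 * k) (s1 p) := by
  rw [sseq_succ, sref_of_odd ⟨k, by omega⟩]

lemma sseq_one_two_mul (k : ℕ) (p : ℤ × ℤ) :
    sseq 1 (2 * k) p = ((1 - 2 * k) * p.1 + k * p.2, (1 + 2 * k) * p.2 - 4 * k * p.1) := by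
  induction k generalizing p with
  | zero => ext <;> simp [sseq]
  | succ k ih =>
    rw [Nat.mul_succ, sseq_succ, sseq_one_two_mul_add_one, ih,
      sref_of_even ⟨k + 1, by omega⟩]
    ext <;> simp only [s0, s1] <;> push_cast <;> ring

def rootP (k : ℤ) : ℤ × ℤ := (2 * k + 1, 4 * k + 4)

def rootR (k : ℤ) : ℤ × ℤ := (k, 2 * k + 1)

lemma rootP_ne_zero (k : ℤ) : rootP k ≠ 0 := by
  simp [rootP, Prod.ext_iff]; omega

lemma rootR_ne_zero (k : ℤ) : rootR k ≠ 0 := by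
  simp [rootR, Prod.ext_iff]; omega

lemma sseq_one_two_mul_alpha0 (k : ℕ) : sseq 1 (2 * k) (1, 0) = -rootP (k - 1) := by
  rw [sseq_one_two_mul]; ext <;> simp [rootP] <;> ring

lemma sseq_one_two_mul_alpha1 (k : ℕ) : sseq 1 (2 * k) (0, 1) = rootR k := by
  rw [sseq_one_two_mul]; ext <;> simp [rootR]; ring

lemma sseq_one_two_mul_add_one_alpha0 (k : ℕ) : sseq 1 (2 * k + 1) (1, 0) = rootP k := by
  rw [sseq_one_two_mul_add_one, sseq_one_two_mul]; ext <;> simp [s1, rootP] <;> ring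

lemma sseq_one_two_mul_add_one_alpha1 (k : ℕ) : sseq 1 (2 * k + 1) (0, 1) = -rootR k := by
  rw [sseq_one_two_mul_add_one, sseq_one_two_mul]; ext <;> simp [s1, rootR]; ring

lemma ev_mk (a b : ℤ) : ev (a, b) = a * A0 + b * A1 := by
  simp [ev, zsmul_eq_mul]

lemma ev_neg (p : ℤ × ℤ) : ev (-p) = -ev p := by
  simp [ev]; abel

lemma ev_ne_zero {p : ℤ × ℤ} (hp : p ≠ 0) : ev p ≠ 0 := by
  have hev : ev p = algebraMap (MvPolynomial (Fin 2) ℚ) Qfield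
      (p.1 • MvPolynomial.X 0 + p.2 • MvPolynomial.X 1) := by
    simp [ev, A0, A1]
  rw [hev, map_ne_zero_iff _ (IsFractionRing.injective _ _)]
  intro h
  have h0 := congrArg (MvPolynomial.eval ![1, 0]) h
  have h1 := congrArg (MvPolynomial.eval ![0, 1]) h
  simp at h0 h1
  exact hp (Prod.ext h0 h1)

lemma A0_ne_zero : A0 ≠ 0 := by
  simpa [ev_mk] using ev_ne_zero (p := (1, 0)) (by simp)

lemma sum_range_two_mul (l : ℕ) :
    ∑ i ∈ Finset.range (2 * l), (ev (sseq 1 i (1, 0)))⁻¹ * (ev (sseq 1 i (0, 1)))⁻¹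
      = 4 * l * (A0⁻¹ * (ev (rootP (l - 1)))⁻¹) := by
  induction l with
  | zero => simp
  | succ l ih =>
    rw [Nat.mul_succ, Finset.sum_range_succ, Finset.sum_range_succ, ih,
      sseq_one_two_mul_alpha0, sseq_one_two_mul_alpha1, sseq_one_two_mul_add_one_alpha0,
      sseq_one_two_mul_add_one_alpha1, ev_neg, ev_neg, Nat.cast_succ, Nat.cast_succ,
      add_sub_cancel_right]
    refine telescope_step A0_ne_zero (ev_ne_zero (rootP_ne_zero _))
      (ev_ne_zero (rootP_ne_zero _)) (ev_ne_zero (rootR_ne_zero _)) ?_ ?_ <;>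
      simp only [rootP, rootR, ev_mk] <;> push_cast <;> ring

/-- `Rat.smul_def` does not apply: the `ℚ`-action on `Qfield` is the one induced from
`MvPolynomial (Fin 2) ℚ`, not the one of a division ring. -/
lemma natCast_smul_eq_mul (n : ℕ) (x : Qfield) : (n : ℚ) • x = n * x :=
  (Nat.cast_smul_eq_nsmul ℚ n x).trans (nsmul_eq_mul n x)

theorem caseA_sum_general (l : ℕ) :
    ∑ i ∈ Finset.range (2 * l),
        (ev (sseq 1 i (1, 0)))⁻¹ * (ev (sseq 1 i (0, 1)))⁻¹
      = (4 * l : ℚ) • ((ev (1, 0))⁻¹ * (ev (sseq 1 (2 * l - 1) (1, 0)))⁻¹) := by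
  rw [show (4 * l : ℚ) = (4 * l : ℕ) by norm_cast, natCast_smul_eq_mul, sum_range_two_mul]
  rcases l with _ | l
  · simp
  · rw [show 2 * (l + 1) - 1 = 2 * l + 1 by omega, sseq_one_two_mul_add_one_alpha0]
    simp [ev_mk]

/-- Case A: `A_l := ∑_{i=0}^{2l-1} s_{1,i}(α₀)⁻¹ s_{1,i}(α₁)⁻¹` equals
`4l · α₀⁻¹ · s_{1,2l-1}(α₀)⁻¹` for every `l ≥ 1`.  (Here `s_{1,i} = sseq 1 i`.) -/
theorem caseA_sum (l : ℕ) (hl : 1 ≤ l) :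
    ∑ i ∈ Finset.range (2 * l),
        (ev (sseq 1 i (1, 0)))⁻¹ * (ev (sseq 1 i (0, 1)))⁻¹
      = (4 * l : ℚ) • ((ev (1, 0))⁻¹ * (ev (sseq 1 (2 * l - 1) (1, 0)))⁻¹) :=
  caseA_sum_general l

end
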